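/- arXiv:2112.11752 — 2 statements merged into one kernel-verified Lean document; each statement's English description precedes it below -/
import Mathlib

section
/- Let (x_n)_{n≥1} be a sequence in [0,1), let 0 < α ≤ 1, and suppose there exists a function F : ℕ × ℕ → ℝ which is monotonically increasing in its first argument and satisfies, for all N ∈ ℕ and all integers 1 ≤ K ≤ N/2, max_{s=1,…,K} | (1/(2s)) · #{(l,m) : 1 ≤ l, m ≤ N, l ≠ m, ‖x_l − x_m‖ < s/N^α} − N^{2−α} | < F(K, N). Then there exists an integer N₀ > 0 such that for all N ≥ N₀ and all integers K satisfying (1/2) N^{(2/5)α} ≤ K ≤ N^{(2/5)α}, one has N^α · D_N*(x_n) ≤ 5 · max( N^{1 − (1/5)α}, √( N^α · F(K², N) ) ). -/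
/-
Cut the circle into `m = ⌈N^α⌉` cells and let `c_t` count the points in the `t`-th of the `m`
cyclic windows of `w = K²` consecutive cells. Two points in cells at cyclic distance `d < w` share
`w - d` windows, so summing over the thresholds `s ≤ w` bounds `m ∑ c_t²` by the pair counts at the
scales `s / N^α`, i.e. by about `(w N)² + N^α w² F(w, N)`. An interval `[0, b)` with discrepancy
`D` makes the windows meeting it (or lying inside it) carry about `w D N` points more (or fewer)
than their share of `∑ c_t = w N`; Cauchy–Schwarz on this group of windows and on its complement
then gives `m ∑ c_t² ≥ (w N)² + (w D N)²`. With `w ≈ N^(4α/5)` the two bounds force the claimed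
bound on `D`; for `α ≤ 5/6` it already follows from `D ≤ 1`.
-/

open scoped Classical

/-- Distance from `x` to the nearest integer. -/
noncomputable def nint (x : ℝ) : ℝ := ⨅ k : ℤ, |x - (k : ℝ)|

/-- Number of ordered pairs `(l,m)`, `1 ≤ l,m ≤ N`, `l ≠ m`, with
`‖x_l - x_m‖ < r` (strict inequality). -/
noncomputable def pairCountLt (x : ℕ → ℝ) (N : ℕ) (r : ℝ) : ℕ :=
  (((Finset.Icc 1 N) ×ˢ (Finset.Icc 1 N)).filter
    (fun p => p.1 ≠ p.2 ∧ nint (x p.1 - x p.2) < r)).card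

/-- Star-discrepancy of the first `N` points of a sequence in `[0,1)`. -/
noncomputable def starDiscrepancy (N : ℕ) (x : ℕ → ℝ) : ℝ :=
  sSup {v : ℝ | ∃ b : ℝ, 0 < b ∧ b ≤ 1 ∧
    v = |(((Finset.Icc 1 N).filter (fun n => 0 ≤ x n ∧ x n < b)).card : ℝ) / N - b|}

open Finset

lemma nint_le_abs_sub_intCast (x : ℝ) (k : ℤ) : nint x ≤ |x - k| :=
  ciInf_le ⟨0, by rintro _ ⟨j, rfl⟩; positivity⟩ k

lemma nint_le_abs (x : ℝ) : nint x ≤ |x| := by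
  simpa using nint_le_abs_sub_intCast x 0

lemma nint_le_one_sub_abs {x : ℝ} (hx : |x| ≤ 1) : nint x ≤ 1 - |x| := by
  rcases le_total 0 x with h | h
  · rw [abs_of_nonneg h] at hx ⊢
    calc nint x ≤ |x - (1 : ℤ)| := nint_le_abs_sub_intCast x 1
      _ = 1 - x := by rw [Int.cast_one, abs_of_nonpos (by linarith)]; ring
  · rw [abs_of_nonpos h] at hx ⊢
    calc nint x ≤ |x - (-1 : ℤ)| := nint_le_abs_sub_intCast x (-1)
      _ = 1 - -x := by rw [Int.cast_neg, Int.cast_one, abs_of_nonneg (by linarith)]; ring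

lemma Nat.cast_dist (j k : ℕ) : (Nat.dist j k : ℝ) = |(j : ℝ) - k| := by
  rcases le_total j k with h | h
  · rw [Nat.dist_eq_sub_of_le h, Nat.cast_sub h, abs_sub_comm,
      abs_of_nonneg (by simpa using h)]
  · rw [Nat.dist_eq_sub_of_le_right h, Nat.cast_sub h, abs_of_nonneg (by simpa using h)]

lemma abs_sub_lt_dist_floor_add_one {a b : ℝ} (ha : 0 ≤ a) (hb : 0 ≤ b) :
    |a - b| < Nat.dist ⌊a⌋₊ ⌊b⌋₊ + 1 := by
  rw [Nat.cast_dist, abs_sub_lt_iff]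
  have := Nat.floor_le ha; have := Nat.floor_le hb
  have := Nat.lt_floor_add_one a; have := Nat.lt_floor_add_one b
  constructor <;> linarith [le_abs_self ((⌊a⌋₊ : ℝ) - ⌊b⌋₊), neg_abs_le ((⌊a⌋₊ : ℝ) - ⌊b⌋₊)]

lemma dist_floor_lt_abs_sub_add_one {a b : ℝ} (ha : 0 ≤ a) (hb : 0 ≤ b) :
    (Nat.dist ⌊a⌋₊ ⌊b⌋₊ : ℝ) < |a - b| + 1 := by
  rw [Nat.cast_dist, abs_sub_lt_iff]
  have := Nat.floor_le ha; have := Nat.floor_le hb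
  have := Nat.lt_floor_add_one a; have := Nat.lt_floor_add_one b
  constructor <;> linarith [le_abs_self (a - b), neg_abs_le (a - b)]

def cycDist (m j k : ℕ) : ℕ := min (Nat.dist j k) (m - Nat.dist j k)

lemma nint_sub_mul_lt_cycDist_add_one {m : ℕ} {P u v : ℝ} (hP : 0 < P) (hPm : P ≤ m)
    (hu : u ∈ Set.Ico 0 1) (hv : v ∈ Set.Ico 0 1) :
    nint (u - v) * P < cycDist m ⌊u * P⌋₊ ⌊v * P⌋₊ + 1 := by
  obtain ⟨hu0, hu1⟩ := hu
  obtain ⟨hv0, hv1⟩ := hv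
  have huP : 0 ≤ u * P := by positivity
  have hvP : 0 ≤ v * P := by positivity
  have hdist_lt : Nat.dist ⌊u * P⌋₊ ⌊v * P⌋₊ < m := by
    have hj := (Nat.floor_lt huP).2 (by nlinarith)
    have hk := (Nat.floor_lt hvP).2 (by nlinarith)
    unfold Nat.dist; omega
  have hscale : |u * P - v * P| = |u - v| * P := by
    rw [← sub_mul, abs_mul, abs_of_pos hP]
  have hnear := nint_le_abs (u - v)
  have hfar := nint_le_one_sub_abs (x := u - v) (by rw [abs_le]; constructor <;> linarith)
  have h1 := abs_sub_lt_dist_floor_add_one huP hvP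
  have h2 := dist_floor_lt_abs_sub_add_one huP hvP
  rw [hscale] at h1 h2
  unfold cycDist
  rw [Nat.cast_min, Nat.cast_sub hdist_lt.le, ← min_add_add_right, lt_min_iff]
  constructor <;> nlinarith

/-- `1` if the cell `j` lies in the cyclic window `{t, t + 1, …, t + w - 1}` of a circle cut into
`m` cells, `0` otherwise. -/
def inWindow (m w j t : ℕ) : ℕ := if (j + (m - t)) % m < w then 1 else 0

section CyclicWindows

variable {m w : ℕ}

lemma add_tsub_mod_of_lt {j t : ℕ} (hj : j < m) (ht : t < m) :
    (j + (m - t)) % m = if t ≤ j then j - t else j + m - t := by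
  split_ifs with h
  · rw [show j + (m - t) = m + (j - t) by omega, Nat.add_mod_left, Nat.mod_eq_of_lt (by omega)]
  · rw [Nat.mod_eq_of_lt (by omega)]; omega

lemma mod_eq_ite_of_lt_two_mul {a : ℕ} (h : a < 2 * m) : a % m = if a < m then a else a - m := by
  split_ifs with h'
  · exact Nat.mod_eq_of_lt h'
  · rw [show a = m + (a - m) by omega, Nat.add_mod_left, Nat.mod_eq_of_lt (by omega)]; omega

lemma sum_window_mul_shifted_window (hm : 2 * w ≤ m) {d : ℕ} (hd : d < m) :
    ∑ u ∈ range m, (if u < w then 1 else 0) * (if (d + u) % m < w then 1 else 0)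
      = w - min d (m - d) := by
  rw [← sum_subset (range_subset_range.2 (by omega : w ≤ m))
    (fun u _ hu => by simp_all)]
  rw [sum_congr rfl (fun u hu => by rw [if_pos (mem_range.1 hu), one_mul]), ← card_filter]
  have hfilter : {u ∈ range w | (d + u) % m < w} = range (w - d) ∪ Ico (m - d) w := by
    ext u
    simp only [mem_filter, mem_range, mem_union, mem_Ico]
    rcases lt_or_ge u w with hu | hu
    · rw [mod_eq_ite_of_lt_two_mul (by omega)]
      split_ifs <;> omega
    · omega
  rw [hfilter, card_union_of_disjoint (disjoint_left.2 fun u hu hu' => by simp at hu hu'; omega),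
    card_range, Nat.card_Ico]
  omega

/-- Reindex the windows by the offset `(j - t) mod m` of `j` in them, an involution of the cells. -/
lemma sum_inWindow_mul_inWindow (hm : 2 * w ≤ m) {j k : ℕ} (hj : j < m) (hk : k < m) :
    ∑ t ∈ range m, inWindow m w j t * inWindow m w k t = w - cycDist m j k := by
  have hoff : ∀ t < m, (j + (m - t)) % m < m := fun t _ => Nat.mod_lt _ (by omega)
  have hinv : ∀ t < m, (j + (m - (j + (m - t)) % m)) % m = t := by
    intro t ht
    rw [add_tsub_mod_of_lt hj ht]
    split_ifs with h
    · rw [add_tsub_mod_of_lt hj (by omega), if_pos (by omega)]; omega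
    · rw [add_tsub_mod_of_lt hj (by omega), if_neg (by omega)]; omega
  have hdist : cycDist m j k = min ((k + (m - j)) % m) (m - (k + (m - j)) % m) := by
    unfold cycDist Nat.dist
    rw [add_tsub_mod_of_lt hk hj]
    split_ifs <;> omega
  rw [hdist, ← sum_window_mul_shifted_window hm (Nat.mod_lt _ (by omega))]
  refine sum_nbij' (fun t => (j + (m - t)) % m) (fun u => (j + (m - u)) % m) ?_ ?_ ?_ ?_ ?_
  · simp only [mem_range]; exact hoff
  · simp only [mem_range]; exact hoff
  · simp only [mem_range]; exact hinv
  · simp only [mem_range]; exact hinv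
  · intro t ht
    rw [mem_range] at ht
    have hshift : (k + (m - t)) % m = ((k + (m - j)) % m + (j + (m - t)) % m) % m := by
      rw [add_tsub_mod_of_lt hk ht, add_tsub_mod_of_lt hk hj, add_tsub_mod_of_lt hj ht]
      split_ifs <;> rw [mod_eq_ite_of_lt_two_mul (by omega)] <;> split_ifs <;> omega
    rw [inWindow, inWindow, hshift]

lemma sum_inWindow (hm : 2 * w ≤ m) {j : ℕ} (hj : j < m) : ∑ t ∈ range m, inWindow m w j t = w := by
  have hsq : ∀ t, inWindow m w j t * inWindow m w j t = inWindow m w j t := by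
    intro t; unfold inWindow; split_ifs <;> rfl
  calc ∑ t ∈ range m, inWindow m w j t = ∑ t ∈ range m, inWindow m w j t * inWindow m w j t :=
        sum_congr rfl fun t _ => (hsq t).symm
    _ = w := by rw [sum_inWindow_mul_inWindow hm hj hj]; simp [cycDist]

lemma sum_inWindow_le (hm : 2 * w ≤ m) {j : ℕ} (hj : j < m) {G : Finset ℕ} (hG : G ⊆ range m) :
    ∑ t ∈ G, inWindow m w j t ≤ w :=
  (sum_le_sum_of_subset hG).trans_eq (sum_inWindow hm hj)

lemma sum_inWindow_of_forall_mem (hm : 2 * w ≤ m) {j : ℕ} (hj : j < m) {G : Finset ℕ}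
    (hG : G ⊆ range m) (hcov : ∀ t < m, (j + (m - t)) % m < w → t ∈ G) :
    ∑ t ∈ G, inWindow m w j t = w := by
  refine (sum_subset hG fun t ht htG => ?_).trans (sum_inWindow hm hj)
  unfold inWindow
  rw [if_neg fun h => htG (hcov t (mem_range.1 ht) h)]

lemma inWindow_eq_zero_of_add_le {j t B : ℕ} (hj : j < m) (hjB : B ≤ j) (ht : t + w ≤ B) :
    inWindow m w j t = 0 := by
  unfold inWindow
  rw [add_tsub_mod_of_lt hj (by omega), if_pos (show t ≤ j by omega), if_neg (by omega)]

end CyclicWindows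

lemma sum_tsub_eq_sum_card_filter_lt {ι : Type*} (T : Finset ι) (g : ι → ℕ) (w : ℕ) :
    ∑ p ∈ T, (w - g p) = ∑ s ∈ Icc 1 w, #{p ∈ T | g p < s} := by
  simp_rw [card_filter]
  rw [sum_comm]
  refine sum_congr rfl fun p _ => ?_
  rw [← card_filter, show {s ∈ Icc 1 w | g p < s} = Icc (g p + 1) w by ext; simp; omega,
    Nat.card_Icc]
  omega

noncomputable def windowCount (x : ℕ → ℝ) (N : ℕ) (P : ℝ) (w t : ℕ) : ℕ :=
  ∑ n ∈ Icc 1 N, inWindow ⌈P⌉₊ w ⌊x n * P⌋₊ t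

lemma floor_mul_lt_ceil {u P : ℝ} (hu : u ∈ Set.Ico 0 1) (hP : 0 < P) : ⌊u * P⌋₊ < ⌈P⌉₊ :=
  (Nat.floor_lt (mul_nonneg hu.1 hP.le)).2
    ((mul_lt_of_lt_one_left hP hu.2).trans_le (Nat.le_ceil P))

lemma floor_mul_le_ceil {b P : ℝ} (hb : b ≤ 1) (hP : 0 ≤ P) : ⌊b * P⌋₊ ≤ ⌈P⌉₊ :=
  (Nat.floor_le_floor (mul_le_of_le_one_left hP hb)).trans (Nat.floor_le_ceil P)

section WindowCount

variable {x : ℕ → ℝ} {N w : ℕ} {P : ℝ}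

lemma sum_windowCount (hx : ∀ n, x n ∈ Set.Ico 0 1) (hP : 0 < P) (hw : 2 * w ≤ ⌈P⌉₊) :
    ∑ t ∈ range ⌈P⌉₊, windowCount x N P w t = w * N := by
  unfold windowCount
  rw [sum_comm, sum_congr rfl fun n _ => sum_inWindow hw (floor_mul_lt_ceil (hx n) hP),
    sum_const, Nat.card_Icc, smul_eq_mul, add_tsub_cancel_right, mul_comm]

lemma sum_windowCount_sq (hx : ∀ n, x n ∈ Set.Ico 0 1) (hP : 0 < P) (hw : 2 * w ≤ ⌈P⌉₊) :
    ∑ t ∈ range ⌈P⌉₊, windowCount x N P w t ^ 2 =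
      ∑ p ∈ Icc 1 N ×ˢ Icc 1 N, (w - cycDist ⌈P⌉₊ ⌊x p.1 * P⌋₊ ⌊x p.2 * P⌋₊) := by
  have hsq : ∀ t, windowCount x N P w t ^ 2 = ∑ p ∈ Icc 1 N ×ˢ Icc 1 N,
      inWindow ⌈P⌉₊ w ⌊x p.1 * P⌋₊ t * inWindow ⌈P⌉₊ w ⌊x p.2 * P⌋₊ t := fun t => by
    rw [windowCount, sq, sum_mul_sum, sum_product]
  rw [sum_congr rfl fun t _ => hsq t, sum_comm]
  exact sum_congr rfl fun p _ =>
    sum_inWindow_mul_inWindow hw (floor_mul_lt_ceil (hx _) hP) (floor_mul_lt_ceil (hx _) hP)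

lemma sum_windowCount_sq_le (hx : ∀ n, x n ∈ Set.Ico 0 1) (hP : 0 < P) (hw : 2 * w ≤ ⌈P⌉₊) :
    ∑ t ∈ range ⌈P⌉₊, windowCount x N P w t ^ 2 ≤
      w * N + ∑ s ∈ Icc 1 w, pairCountLt x N (s / P) := by
  rw [sum_windowCount_sq hx hP hw, ← sum_filter_add_sum_filter_not _ (fun p => p.1 = p.2)]
  gcongr ?_ + ?_
  · rw [← diag_eq_filter]
    calc _ ≤ #(Icc 1 N).diag • w := sum_le_card_nsmul _ _ _ fun p _ => tsub_le_self
      _ = w * N := by simp [mul_comm]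
  · rw [sum_tsub_eq_sum_card_filter_lt]
    refine sum_le_sum fun s _ => card_le_card fun p hp => ?_
    simp only [mem_filter] at hp ⊢
    obtain ⟨⟨hpT, hne⟩, hps⟩ := hp
    refine ⟨hpT, hne, (lt_div_iff₀ hP).2 ?_⟩
    calc nint (x p.1 - x p.2) * P < cycDist ⌈P⌉₊ ⌊x p.1 * P⌋₊ ⌊x p.2 * P⌋₊ + 1 :=
          nint_sub_mul_lt_cycDist_add_one hP (Nat.le_ceil P) (hx _) (hx _)
      _ ≤ s := by exact_mod_cast hps

lemma mul_card_lt_le_sum_windowCount (hx : ∀ n, x n ∈ Set.Ico 0 1) (hP : 0 < P)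
    (hw : 2 * w ≤ ⌈P⌉₊) (b : ℝ) :
    w * #{n ∈ Icc 1 N | x n < b} ≤
      ∑ t ∈ {t ∈ range ⌈P⌉₊ | t < ⌈b * P⌉₊ ∨ ⌈P⌉₊ - w < t}, windowCount x N P w t := by
  unfold windowCount
  rw [sum_comm, mul_comm, ← smul_eq_mul, ← sum_const]
  refine le_trans (le_of_eq (sum_congr rfl fun n hn => ?_))
    (sum_le_sum_of_subset (filter_subset _ _))
  have hcell := floor_mul_lt_ceil (hx n) hP
  have hlt : ⌊x n * P⌋₊ < ⌈b * P⌉₊ := (Nat.floor_lt (mul_nonneg (hx n).1 hP.le)).2 <|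
    (mul_lt_mul_of_pos_right (mem_filter.1 hn).2 hP).trans_le (Nat.le_ceil _)
  refine (sum_inWindow_of_forall_mem hw hcell (filter_subset _ _) fun t ht hin => ?_).symm
  rw [add_tsub_mod_of_lt hcell ht] at hin
  simp only [mem_filter, mem_range]
  split_ifs at hin <;> omega

lemma sum_windowCount_le_mul_card_lt (hx : ∀ n, x n ∈ Set.Ico 0 1) (hP : 0 < P) (hw0 : 0 < w)
    (hw : 2 * w ≤ ⌈P⌉₊) {b : ℝ} (hb : b ≤ 1) :
    ∑ t ∈ range (⌊b * P⌋₊ + 1 - w), windowCount x N P w t ≤ w * #{n ∈ Icc 1 N | x n < b} := by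
  have hG : range (⌊b * P⌋₊ + 1 - w) ⊆ range ⌈P⌉₊ := by
    have := floor_mul_le_ceil hb hP.le
    exact range_subset_range.2 (by omega)
  unfold windowCount
  rw [sum_comm, ← sum_filter_add_sum_filter_not _ (fun n => x n < b)]
  have hfar : ∀ n ∈ {n ∈ Icc 1 N | ¬x n < b},
      ∑ t ∈ range (⌊b * P⌋₊ + 1 - w), inWindow ⌈P⌉₊ w ⌊x n * P⌋₊ t = 0 := by
    intro n hn
    have hbn : ⌊b * P⌋₊ ≤ ⌊x n * P⌋₊ :=
      Nat.floor_le_floor (mul_le_mul_of_nonneg_right (not_lt.1 (mem_filter.1 hn).2) hP.le)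
    refine sum_eq_zero fun t ht => inWindow_eq_zero_of_add_le
      (floor_mul_lt_ceil (hx n) hP) hbn ?_
    rw [mem_range] at ht
    omega
  rw [sum_eq_zero hfar, add_zero]
  calc _ ≤ #{n ∈ Icc 1 N | x n < b} • w :=
        sum_le_card_nsmul _ _ _ fun n _ => sum_inWindow_le hw (floor_mul_lt_ceil (hx n) hP) hG
    _ = w * #{n ∈ Icc 1 N | x n < b} := by rw [smul_eq_mul, mul_comm]

lemma exists_sum_windowCount_sub_ge (hx : ∀ n, x n ∈ Set.Ico 0 1) (hP : 1 ≤ P) (hw0 : 0 < w)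
    (hw : 2 * w ≤ ⌈P⌉₊) {b δ : ℝ} (hb : 0 ≤ b)
    (hδ : δ * N < #{n ∈ Icc 1 N | x n < b} - b * N) :
    ∃ G ⊆ range ⌈P⌉₊, (δ - w / P) * (w * N) ≤
      ∑ t ∈ G, (windowCount x N P w t : ℝ) - #G * (w * N) / ⌈P⌉₊ := by
  set m := ⌈P⌉₊
  have hP0 : 0 < P := by linarith
  set G := {t ∈ range m | t < ⌈b * P⌉₊ ∨ m - w < t}
  refine ⟨G, filter_subset _ _, ?_⟩
  have hsum : (w : ℝ) * #{n ∈ Icc 1 N | x n < b} ≤ ∑ t ∈ G, (windowCount x N P w t : ℝ) := by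
    exact_mod_cast mul_card_lt_le_sum_windowCount hx hP0 hw b
  have hG : #G + 1 ≤ ⌈b * P⌉₊ + w := by
    have := card_union_le (range ⌈b * P⌉₊) (Ico (m - w + 1) m)
    have := card_le_card (s := G) (t := range ⌈b * P⌉₊ ∪ Ico (m - w + 1) m)
      fun t ht => by simp only [G, mem_filter, mem_range, mem_union, mem_Ico] at ht ⊢; omega
    simp only [card_range, Nat.card_Ico] at *
    omega
  have hcard : (#G : ℝ) / m ≤ b + w / P := by
    have hG' : (#G : ℝ) + 1 ≤ ⌈b * P⌉₊ + w := by exact_mod_cast hG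
    have := Nat.ceil_lt_add_one (mul_nonneg hb hP0.le)
    have hbm := mul_le_mul_of_nonneg_left (Nat.le_ceil P) hb
    have hwm : (w : ℝ) ≤ w * m / P := by
      rw [le_div_iff₀ hP0]; exact mul_le_mul_of_nonneg_left (Nat.le_ceil P) (by positivity)
    rw [div_le_iff₀ (by positivity), add_mul, div_mul_eq_mul_div]
    linarith
  rw [show (#G : ℝ) * (w * N) / m = #G / m * (w * N) by ring]
  nlinarith [mul_le_mul_of_nonneg_right hcard (by positivity : (0 : ℝ) ≤ w * N),
    mul_le_mul_of_nonneg_left hδ.le (Nat.cast_nonneg (α := ℝ) w)]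

lemma exists_sub_sum_windowCount_ge (hx : ∀ n, x n ∈ Set.Ico 0 1) (hP : 1 ≤ P) (hw0 : 0 < w)
    (hw : 2 * w ≤ ⌈P⌉₊) {b δ : ℝ} (hb : b ∈ Set.Icc 0 1)
    (hδ : δ * N < b * N - #{n ∈ Icc 1 N | x n < b}) :
    ∃ G ⊆ range ⌈P⌉₊, (δ - 2 * w / P) * (w * N) ≤
      #G * (w * N) / ⌈P⌉₊ - ∑ t ∈ G, (windowCount x N P w t : ℝ) := by
  set m := ⌈P⌉₊
  have hP0 : 0 < P := by linarith
  set G := range (⌊b * P⌋₊ + 1 - w)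
  refine ⟨G, range_subset_range.2 ?_, ?_⟩
  · have := floor_mul_le_ceil hb.2 hP0.le
    omega
  have hsum : ∑ t ∈ G, (windowCount x N P w t : ℝ) ≤ w * #{n ∈ Icc 1 N | x n < b} := by
    exact_mod_cast sum_windowCount_le_mul_card_lt hx hP0 hw0 hw hb.2
  have hcard : b - (1 + w) / P ≤ #G / m := by
    have hG : (⌊b * P⌋₊ : ℝ) + 1 ≤ #G + w := by
      rw [card_range]; exact_mod_cast (by omega : ⌊b * P⌋₊ + 1 ≤ ⌊b * P⌋₊ + 1 - w + w)
    have := Nat.lt_floor_add_one (b * P)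
    have hρ : (1 + w) / P * P = 1 + w := div_mul_cancel₀ _ hP0.ne'
    rw [le_div_iff₀ (by positivity)]
    nlinarith [hb.2, mul_le_mul_of_nonneg_left (Nat.ceil_lt_add_one hP0.le).le hb.1,
      mul_le_mul_of_nonneg_left (Nat.le_ceil P) (by positivity : (0 : ℝ) ≤ (1 + w) / P)]
  have h2w : (1 + w : ℝ) / P ≤ 2 * w / P := by
    gcongr; exact_mod_cast (by omega : 1 + w ≤ 2 * w)
  rw [show (#G : ℝ) * (w * N) / m = #G / m * (w * N) by ring]
  have hwN : (0 : ℝ) ≤ w * N := by positivity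
  nlinarith [mul_le_mul_of_nonneg_right hcard hwN, mul_le_mul_of_nonneg_right h2w hwN,
    mul_le_mul_of_nonneg_left hδ.le (Nat.cast_nonneg (α := ℝ) w)]

/-- An excess of points in `[0, b)` shows up in the windows meeting the cells below `b`, a deficit
in the windows inside them. -/
lemma exists_abs_sum_windowCount_sub_ge (hx : ∀ n, x n ∈ Set.Ico 0 1) (hP : 1 ≤ P)
    (hw0 : 0 < w) (hw : 2 * w ≤ ⌈P⌉₊) {b δ : ℝ} (hb : b ∈ Set.Icc 0 1)
    (hδ : δ * N < |(#{n ∈ Icc 1 N | x n < b} : ℝ) - b * N|) :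
    ∃ G ⊆ range ⌈P⌉₊, (δ - 2 * w / P) * (w * N) ≤
      |∑ t ∈ G, (windowCount x N P w t : ℝ) - #G * (w * N) / ⌈P⌉₊| := by
  have hwN : (0 : ℝ) ≤ w * N := by positivity
  rcases le_or_gt (b * N) (#{n ∈ Icc 1 N | x n < b} : ℝ) with hexc | hdef
  · rw [abs_of_nonneg (sub_nonneg.2 hexc)] at hδ
    obtain ⟨G, hG, hX⟩ := exists_sum_windowCount_sub_ge hx hP hw0 hw hb.1 hδ
    refine ⟨G, hG, le_trans ?_ (hX.trans (le_abs_self _))⟩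
    gcongr
    linarith [(by positivity : (0 : ℝ) ≤ w / P), show 2 * (w : ℝ) / P = 2 * (w / P) by ring]
  · rw [abs_of_neg (sub_neg.2 hdef), neg_sub] at hδ
    obtain ⟨G, hG, hX⟩ := exists_sub_sum_windowCount_ge hx hP hw0 hw hb hδ
    exact ⟨G, hG, hX.trans (by rw [abs_sub_comm]; exact le_abs_self _)⟩

end WindowCount

lemma add_sq_add_four_mul_sq_le {m₁ m₂ S₁ S₂ A₁ A₂ : ℝ} (hm₁ : 0 < m₁) (hm₂ : 0 < m₂)
    (h₁ : S₁ ^ 2 ≤ m₁ * A₁) (h₂ : S₂ ^ 2 ≤ m₂ * A₂) :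
    (S₁ + S₂) ^ 2 + 4 * (S₁ - m₁ * (S₁ + S₂) / (m₁ + m₂)) ^ 2 ≤ (m₁ + m₂) * (A₁ + A₂) := by
  have hX : S₁ - m₁ * (S₁ + S₂) / (m₁ + m₂) = (S₁ * m₂ - S₂ * m₁) / (m₁ + m₂) := by
    field_simp; ring
  set Y := S₁ * m₂ - S₂ * m₁
  have hY : 4 * (Y / (m₁ + m₂)) ^ 2 ≤ Y ^ 2 / (m₁ * m₂) := by
    rw [div_pow, ← mul_div_assoc, div_le_div_iff₀ (by positivity) (by positivity)]
    nlinarith [mul_le_mul_of_nonneg_left (by nlinarith [sq_nonneg (m₁ - m₂)] :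
      4 * (m₁ * m₂) ≤ (m₁ + m₂) ^ 2) (sq_nonneg Y)]
  have hA₁ : S₁ ^ 2 / m₁ ≤ A₁ := by rw [div_le_iff₀ hm₁]; linarith
  have hA₂ : S₂ ^ 2 / m₂ ≤ A₂ := by rw [div_le_iff₀ hm₂]; linarith
  calc (S₁ + S₂) ^ 2 + 4 * (S₁ - m₁ * (S₁ + S₂) / (m₁ + m₂)) ^ 2
      ≤ (S₁ + S₂) ^ 2 + Y ^ 2 / (m₁ * m₂) := by rw [hX]; linarith
    _ = (m₁ + m₂) * (S₁ ^ 2 / m₁ + S₂ ^ 2 / m₂) := by field_simp; ring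
    _ ≤ (m₁ + m₂) * (A₁ + A₂) := by gcongr

lemma sq_sum_add_four_mul_sq_le_card_mul_sum_sq {ι : Type*} {s G : Finset ι} (hG : G ⊆ s)
    (f : ι → ℝ) :
    (∑ i ∈ s, f i) ^ 2 + 4 * (∑ i ∈ G, f i - #G * (∑ i ∈ s, f i) / #s) ^ 2 ≤
      #s * ∑ i ∈ s, f i ^ 2 := by
  rcases G.eq_empty_or_nonempty with rfl | hG₀
  · simpa using sq_sum_le_card_mul_sum_sq
  rcases (s \ G).eq_empty_or_nonempty with hsG | hsG
  · have : G = s := hG.antisymm (sdiff_eq_empty_iff_subset.1 hsG)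
    subst this
    have : (#G : ℝ) ≠ 0 := by simpa using hG₀.ne_empty
    simpa [mul_div_cancel_left₀ _ this] using sq_sum_le_card_mul_sum_sq
  have := add_sq_add_four_mul_sq_le (Nat.cast_pos.2 hG₀.card_pos) (Nat.cast_pos.2 hsG.card_pos)
    (sq_sum_le_card_mul_sum_sq (s := G) (f := f)) (sq_sum_le_card_mul_sum_sq (s := s \ G) (f := f))
  rwa [← Nat.cast_add, add_comm #G, card_sdiff_add_card_eq_card hG, add_comm (∑ i ∈ G, f i),
    sum_sdiff hG, add_comm (∑ i ∈ G, f i ^ 2), sum_sdiff hG] at this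

lemma sum_Icc_natCast_mul_two (w : ℕ) : (∑ s ∈ Icc 1 w, (s : ℝ)) * 2 = w * (w + 1) := by
  induction w with
  | zero => simp
  | succ n ih => rw [sum_Icc_succ_top (by omega), add_mul, ih]; push_cast; ring

theorem sq_add_four_mul_sq_le_of_pairCountLt_le {x : ℕ → ℝ} (hx : ∀ n, x n ∈ Set.Ico 0 1)
    {N w : ℕ} {P b δ E : ℝ} (hP : 1 ≤ P) (hw0 : 0 < w) (hw : 2 * w ≤ ⌈P⌉₊)
    (hb : b ∈ Set.Icc 0 1) (hδ : δ * N < |(#{n ∈ Icc 1 N | x n < b} : ℝ) - b * N|)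
    (hδw : 2 * w / P ≤ δ) (hpair : ∀ s ∈ Icc 1 w, (pairCountLt x N (s / P) : ℝ) ≤ 2 * s * E) :
    (w * N) ^ 2 + 4 * ((δ - 2 * w / P) * (w * N)) ^ 2 ≤
      (P + 1) * (w * N + E * (w * (w + 1))) := by
  have hP0 : 0 < P := by linarith
  obtain ⟨G, hG, hX⟩ := exists_abs_sum_windowCount_sub_ge hx hP hw0 hw hb hδ
  have hvar := sq_sum_add_four_mul_sq_le_card_mul_sum_sq hG (fun t => (windowCount x N P w t : ℝ))
  have htotal : ∑ t ∈ range ⌈P⌉₊, (windowCount x N P w t : ℝ) = w * N := by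
    exact_mod_cast sum_windowCount hx hP0 hw
  have hsq : ∑ t ∈ range ⌈P⌉₊, (windowCount x N P w t : ℝ) ^ 2 ≤ w * N + E * (w * (w + 1)) :=
    calc _ ≤ w * N + ∑ s ∈ Icc 1 w, (pairCountLt x N (s / P) : ℝ) := by
          exact_mod_cast sum_windowCount_sq_le hx hP0 hw
      _ ≤ w * N + ∑ s ∈ Icc 1 w, 2 * s * E := by gcongr with s hs; exact hpair s hs
      _ = w * N + E * (w * (w + 1)) := by
          rw [← sum_Icc_natCast_mul_two, sum_mul, mul_sum]
          congr 1; exact sum_congr rfl fun s _ => by ring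
  rw [card_range, htotal] at hvar
  calc (w * N : ℝ) ^ 2 + 4 * ((δ - 2 * w / P) * (w * N)) ^ 2
      ≤ (w * N) ^ 2 + 4 * (∑ t ∈ G, (windowCount x N P w t : ℝ) - #G * (w * N) / ⌈P⌉₊) ^ 2 := by
        rw [← sq_abs (_ - _)]
        gcongr
    _ ≤ ⌈P⌉₊ * ∑ t ∈ range ⌈P⌉₊, (windowCount x N P w t : ℝ) ^ 2 := hvar
    _ ≤ (P + 1) * (w * N + E * (w * (w + 1))) :=
        mul_le_mul (Nat.ceil_lt_add_one hP0.le).le hsq (sum_nonneg fun _ _ => sq_nonneg _)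
          (by linarith)

lemma abs_card_div_sub_le_one (N : ℕ) (x : ℕ → ℝ) {b : ℝ} (hb : b ∈ Set.Icc 0 1) :
    |(#{n ∈ Icc 1 N | 0 ≤ x n ∧ x n < b} : ℝ) / N - b| ≤ 1 := by
  have hcard : #{n ∈ Icc 1 N | 0 ≤ x n ∧ x n < b} ≤ N :=
    (card_filter_le _ _).trans (by simp)
  have h1 : (#{n ∈ Icc 1 N | 0 ≤ x n ∧ x n < b} : ℝ) / N ≤ 1 :=
    div_le_one_of_le₀ (by exact_mod_cast hcard) (Nat.cast_nonneg N)
  have h0 : 0 ≤ (#{n ∈ Icc 1 N | 0 ≤ x n ∧ x n < b} : ℝ) / N := by positivity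
  rw [abs_sub_le_iff]
  constructor <;> linarith [hb.1, hb.2]

lemma starDiscrepancy_le_one (N : ℕ) (x : ℕ → ℝ) : starDiscrepancy N x ≤ 1 :=
  csSup_le ⟨_, 1, one_pos, le_rfl, rfl⟩ fun _ ⟨_, hb0, hb1, hv⟩ =>
    hv ▸ abs_card_div_sub_le_one N x ⟨hb0.le, hb1⟩

lemma exists_lt_abs_card_sub_of_lt_starDiscrepancy {x : ℕ → ℝ} (hx : ∀ n, 0 ≤ x n) {N : ℕ}
    (hN : 0 < N) {v : ℝ} (hv : v < starDiscrepancy N x) :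
    ∃ b ∈ Set.Ioc (0 : ℝ) 1, v * N < |(#{n ∈ Icc 1 N | x n < b} : ℝ) - b * N| := by
  unfold starDiscrepancy at hv
  obtain ⟨_, ⟨b, hb0, hb1, rfl⟩, hlt⟩ :=
    exists_lt_of_lt_csSup (by exact ⟨_, 1, one_pos, le_rfl, rfl⟩) hv
  refine ⟨b, ⟨hb0, hb1⟩, ?_⟩
  have hN' : (0 : ℝ) < N := by exact_mod_cast hN
  simp only [hx, true_and] at hlt
  calc v * N < |(#{n ∈ Icc 1 N | x n < b} : ℝ) / N - b| * N := by gcongr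
    _ = _ := by rw [← abs_of_pos hN', ← abs_mul, abs_of_pos hN', sub_mul, div_mul_cancel₀ _ hN'.ne']

lemma mul_add_lt_sq_add_sq {N P w D F : ℝ} (hP : 1 ≤ P) (hPN : P ≤ N) (hw : 1 ≤ w)
    (hwP : 10 * w ≤ P) (hF : F ≤ D ^ 2 * P / 25) (hwD : 4 < w * D ^ 2) :
    (P + 1) * (w * N + (N ^ 2 / P + F) * (w * (w + 1))) < (w * N) ^ 2 + (w * D * N) ^ 2 := by
  have hP0 : 0 < P := by linarith
  have hN : 1 ≤ N := hP.trans hPN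
  have hwN : 0 ≤ w * N ^ 2 := by positivity
  have hlin : (P + 1) * (w * N) ≤ 2 * (w * N ^ 2) := by
    nlinarith [mul_le_mul_of_nonneg_left (by linarith : P + 1 ≤ 2 * N) (by positivity : 0 ≤ w * N)]
  have hmain : (P + 1) * (N ^ 2 / P * (w * (w + 1))) ≤ (w * N) ^ 2 + 6 / 5 * (w * N ^ 2) := by
    have hsmall : N ^ 2 / P * (w * (w + 1)) ≤ 1 / 5 * (w * N ^ 2) := by
      rw [div_mul_eq_mul_div, div_le_iff₀ hP0]
      nlinarith [mul_le_mul_of_nonneg_left hwP hwN, mul_le_mul_of_nonneg_left hw hwN]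
    have hsplit : (P + 1) * (N ^ 2 / P * (w * (w + 1)))
        = (w * N) ^ 2 + w * N ^ 2 + N ^ 2 / P * (w * (w + 1)) := by
      field_simp
    linarith
  have hFterm : (P + 1) * (F * (w * (w + 1))) ≤ 4 / 25 * (w * D * N) ^ 2 :=
    calc (P + 1) * (F * (w * (w + 1))) ≤ (P + 1) * (D ^ 2 * P / 25 * (w * (w + 1))) := by gcongr
      _ ≤ (2 * P) * (D ^ 2 * P / 25 * (2 * w ^ 2)) := by
          gcongr ?_ * (_ * ?_)
          · linarith
          · nlinarith
      _ = 4 / 25 * (w * D) ^ 2 * P ^ 2 := by ring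
      _ ≤ 4 / 25 * (w * D) ^ 2 * N ^ 2 := by gcongr
      _ = 4 / 25 * (w * D * N) ^ 2 := by ring
  have hkey : 16 / 5 * (w * N ^ 2) < 21 / 25 * (w * D * N) ^ 2 := by
    have : 0 < w * N ^ 2 := by positivity
    nlinarith
  nlinarith

lemma le_two_mul_mul_add_of_abs_sub_lt {c a E s : ℝ} (hs : 0 < s) (h : |1 / (2 * s) * c - a| < E) :
    c ≤ 2 * s * (a + E) := by
  have h' : c / (2 * s) < a + E := by
    rw [one_div, inv_mul_eq_div] at h
    linarith [(abs_lt.1 h).2]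
  rw [div_lt_iff₀ (by positivity)] at h'
  linarith

lemma five_lt_mul_and_le_of_five_mul_max_lt {N Q D F : ℝ} (hQ : 0 < Q) (hQN : Q ^ 5 ≤ N)
    (h : 5 * max (N / Q) √(Q ^ 5 * F) < Q ^ 5 * D) : 5 < D * Q ∧ F ≤ D ^ 2 * Q ^ 5 / 25 := by
  have hN := (mul_le_mul_of_nonneg_left (le_max_left _ _) (by norm_num : (0 : ℝ) ≤ 5)).trans_lt h
  rw [mul_div_assoc', div_lt_iff₀ hQ] at hN
  have hDQ : 5 < D * Q := by nlinarith [pow_pos hQ 5]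
  refine ⟨hDQ, ?_⟩
  have hF := (mul_le_mul_of_nonneg_left (le_max_right _ _) (by norm_num : (0 : ℝ) ≤ 5)).trans_lt h
  have := (Real.sqrt_lt' (by nlinarith [pow_pos hQ 5])).1
    (by linarith : √(Q ^ 5 * F) < Q ^ 5 * D / 5)
  nlinarith [pow_pos hQ 5]

theorem mul_starDiscrepancy_le_of_abs_sub_lt {x : ℕ → ℝ} (hx : ∀ n, x n ∈ Set.Ico 0 1)
    {N w : ℕ} {Q F : ℝ} (hQ : 10 ≤ Q) (hQN : Q ^ 5 ≤ N) (hwQ : Q ^ 4 ≤ 4 * w) (hw : w ≤ Q ^ 4)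
    (hF : 1 ≤ w → (w : ℝ) ≤ N / 2 → ∀ s : ℕ, 1 ≤ s → s ≤ w →
      |1 / (2 * (s : ℝ)) * pairCountLt x N (s / Q ^ 5) - N ^ 2 / Q ^ 5| < F) :
    Q ^ 5 * starDiscrepancy N x ≤ 5 * max (N / Q) √(Q ^ 5 * F) := by
  set D := starDiscrepancy N x
  by_contra! hcon
  have hQ0 : 0 < Q := by linarith
  have hP : 1 ≤ Q ^ 5 := one_le_pow₀ (by linarith)
  have hN : 0 < N := by exact_mod_cast (hP.trans hQN)
  obtain ⟨hDQ, hFD⟩ := five_lt_mul_and_le_of_five_mul_max_lt hQ0 hQN hcon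
  have hD : 0 < D := by nlinarith
  have hQ4 : (10 : ℝ) ^ 4 ≤ Q ^ 4 := pow_le_pow_left₀ (by norm_num) hQ 4
  have hw1 : 1 ≤ w := by exact_mod_cast (by linarith : (1 : ℝ) ≤ w)
  have hwP : 10 * (w : ℝ) ≤ Q ^ 5 := by nlinarith
  have hwm : 2 * w ≤ ⌈Q ^ 5⌉₊ := by
    have := Nat.le_ceil (Q ^ 5)
    exact_mod_cast (by linarith : 2 * (w : ℝ) ≤ ⌈Q ^ 5⌉₊)
  have hpair : ∀ s ∈ Icc 1 w, (pairCountLt x N (s / Q ^ 5) : ℝ) ≤ 2 * s * (N ^ 2 / Q ^ 5 + F) :=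
    fun s hs => le_two_mul_mul_add_of_abs_sub_lt (by exact_mod_cast (mem_Icc.1 hs).1)
      (hF hw1 (by linarith) s (mem_Icc.1 hs).1 (mem_Icc.1 hs).2)
  obtain ⟨b, hb, hbD⟩ :=
    exists_lt_abs_card_sub_of_lt_starDiscrepancy (fun n => (hx n).1) hN
      (by linarith : 9 / 10 * D < D)
  have hδ : 2 * w / Q ^ 5 ≤ 2 / 5 * D := by
    rw [div_le_iff₀ (by positivity)]; nlinarith
  have hmoment := sq_add_four_mul_sq_le_of_pairCountLt_le hx hP hw1 hwm
    (Set.Ioc_subset_Icc_self hb) hbD (by linarith) hpair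
  refine (mul_add_lt_sq_add_sq hP hQN (by exact_mod_cast hw1) hwP hFD ?_).not_ge
    (le_trans ?_ hmoment)
  · have h25 : 25 * 100 ≤ (D * Q) ^ 2 * Q ^ 2 := by
      gcongr
      · nlinarith
      · nlinarith
    nlinarith [mul_le_mul_of_nonneg_right hwQ (sq_nonneg D)]
  · calc (w * N : ℝ) ^ 2 + (w * D * N) ^ 2 = (w * N) ^ 2 + 4 * (D / 2 * (w * N)) ^ 2 := by ring
      _ ≤ _ := by gcongr; linarith

lemma rpow_mul_starDiscrepancy_le_of_le_five_sixths {x : ℕ → ℝ} {N : ℕ} {α : ℝ}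
    (hN : 1 ≤ (N : ℝ)) (hα : α ≤ 5 / 6) (a : ℝ) :
    (N : ℝ) ^ α * starDiscrepancy N x ≤ 5 * max ((N : ℝ) ^ (1 - 1 / 5 * α)) a :=
  calc (N : ℝ) ^ α * starDiscrepancy N x ≤ (N : ℝ) ^ α :=
        mul_le_of_le_one_right (by positivity) (starDiscrepancy_le_one N x)
    _ ≤ (N : ℝ) ^ (1 - 1 / 5 * α) := Real.rpow_le_rpow_of_exponent_le hN (by linarith)
    _ ≤ max ((N : ℝ) ^ (1 - 1 / 5 * α)) a := le_max_left _ _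
    _ ≤ 5 * max ((N : ℝ) ^ (1 - 1 / 5 * α)) a :=
        le_mul_of_one_le_left (le_max_of_le_left (by positivity)) (by norm_num)

theorem stmt4_general (x : ℕ → ℝ) (hx : ∀ n, x n ∈ Set.Ico (0 : ℝ) 1)
    (α : ℝ) (hα1 : α ≤ 1)
    (F : ℕ × ℕ → ℝ)
    (hF : ∀ N K : ℕ, 1 ≤ K → (K : ℝ) ≤ (N : ℝ) / 2 →
      ∀ s : ℕ, 1 ≤ s → s ≤ K →
        |(1 / (2 * (s : ℝ))) * (pairCountLt x N ((s : ℝ) / (N : ℝ) ^ α) : ℝ)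
          - (N : ℝ) ^ ((2 : ℝ) - α)| < F (K, N)) :
    ∃ N₀ : ℕ, 0 < N₀ ∧ ∀ N : ℕ, N₀ ≤ N → ∀ K : ℕ,
      (1 / 2) * (N : ℝ) ^ ((2 / 5) * α) ≤ (K : ℝ) → (K : ℝ) ≤ (N : ℝ) ^ ((2 / 5) * α) →
      (N : ℝ) ^ α * starDiscrepancy N x ≤
        5 * max ((N : ℝ) ^ (1 - (1 / 5) * α))
          (Real.sqrt ((N : ℝ) ^ α * F (K ^ 2, N))) := by
  refine ⟨10 ^ 6, by norm_num, fun N hN K hK₁ hK₂ => ?_⟩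
  have hN₁ : (10 : ℝ) ^ 6 ≤ N := by exact_mod_cast hN
  rcases le_or_gt α (5 / 6) with hα | hα
  · exact rpow_mul_starDiscrepancy_le_of_le_five_sixths (by linarith) hα _
  set Q := (N : ℝ) ^ (α / 5)
  have hpow : ∀ k : ℕ, (N : ℝ) ^ (α / 5 * k) = Q ^ k := fun k => by
    rw [Real.rpow_mul (by positivity), Real.rpow_natCast]
  have hP : (N : ℝ) ^ α = Q ^ 5 := by rw [← hpow]; norm_num
  have hK : (N : ℝ) ^ (2 / 5 * α) = Q ^ 2 := by rw [← hpow]; ring_nf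
  have hQ : 10 ≤ Q :=
    calc (10 : ℝ) = ((10 : ℝ) ^ 6) ^ (1 / 6 : ℝ) := by
          rw [← Real.rpow_natCast, ← Real.rpow_mul (by norm_num)]; norm_num
      _ ≤ (N : ℝ) ^ (1 / 6 : ℝ) := Real.rpow_le_rpow (by positivity) hN₁ (by norm_num)
      _ ≤ Q := Real.rpow_le_rpow_of_exponent_le (by linarith) (by linarith)
  rw [hK] at hK₁ hK₂
  rw [hP, show (N : ℝ) ^ (1 - 1 / 5 * α) = N / Q by
    rw [show 1 - 1 / 5 * α = 1 - α / 5 by ring, Real.rpow_sub (by linarith), Real.rpow_one]]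
  refine mul_starDiscrepancy_le_of_abs_sub_lt (w := K ^ 2) hx hQ
    (hP ▸ (Real.rpow_le_rpow_of_exponent_le (by linarith) hα1).trans_eq (Real.rpow_one _))
    (by push_cast; nlinarith) (by push_cast; nlinarith) fun hw₁ hw₂ => ?_
  simpa [hP, Real.rpow_sub (by linarith : (0 : ℝ) < N), Real.rpow_two] using
    hF N (K ^ 2) hw₁ (by exact_mod_cast hw₂)

theorem stmt4 (x : ℕ → ℝ) (hx : ∀ n, x n ∈ Set.Ico (0 : ℝ) 1)
    (α : ℝ) (hα0 : 0 < α) (hα1 : α ≤ 1)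
    (F : ℕ × ℕ → ℝ)
    (hFmono : ∀ K₁ K₂ N : ℕ, K₁ ≤ K₂ → F (K₁, N) ≤ F (K₂, N))
    (hF : ∀ N K : ℕ, 1 ≤ K → (K : ℝ) ≤ (N : ℝ) / 2 →
      ∀ s : ℕ, 1 ≤ s → s ≤ K →
        |(1 / (2 * (s : ℝ))) * (pairCountLt x N ((s : ℝ) / (N : ℝ) ^ α) : ℝ)
          - (N : ℝ) ^ ((2 : ℝ) - α)| < F (K, N)) :
    ∃ N₀ : ℕ, 0 < N₀ ∧ ∀ N : ℕ, N₀ ≤ N → ∀ K : ℕ,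
      (1 / 2) * (N : ℝ) ^ ((2 / 5) * α) ≤ (K : ℝ) → (K : ℝ) ≤ (N : ℝ) ^ ((2 / 5) * α) →
      (N : ℝ) ^ α * starDiscrepancy N x ≤
        5 * max ((N : ℝ) ^ (1 - (1 / 5) * α))
          (Real.sqrt ((N : ℝ) ^ α * F (K ^ 2, N))) :=
  stmt4_general x hx α hα1 F hF
end

section
/- Let b ≥ 2 be an integer and let (x_n)_{n≥1} be the van der Corput sequence in base b, i.e. x_n = g_b(n) where g_b is the radical-inverse function in base b. Then (x_n) is a low-discrepancy sequence: there exists a constant C > 0 (depending only on b) such that D_N*(x₁,…,x_N) ≤ C · log(N+1) / N for all N ≥ 1. -/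
open scoped Classical

/-- Radical-inverse function in base `b`: if `r = Σ_j a_j b^j` with digits
`a_j ∈ {0,…,b-1}`, then `radInv b r = Σ_j a_j b^{-j-1}`. -/
noncomputable def radInv (b : ℕ) (r : ℕ) : ℝ :=
  (Nat.ofDigits ((b : ℝ))⁻¹ (Nat.digits b r)) / b

/-! Write `β = (d + β') / b` with a digit `d < b` and `β' ∈ [0, 1]`. Since
`b * g_b(n) = (n mod b) + g_b(n / b)`, the point `g_b(n)` lies below `β` iff `n mod b < d`, or
`n mod b = d` and `g_b(n / b) < β'`. So among `n < N`, the count below `β` is the number of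
residues below `d` (which is `N d / b` up to `d`) plus the count below `β'` among the roughly
`N / b` integers `t` with `b t + d < N`. Each of `m` such digit steps costs at most `b + 2`, and
what is left is at most `N / b ^ m`; taking `b ^ m > N` with `m = O(log N)` gives the bound. -/

open Finset

lemma ofDigits_nonneg {x : ℝ} (hx : 0 ≤ x) (L : List ℕ) : 0 ≤ Nat.ofDigits x L := by
  induction L with
  | nil => simp [Nat.ofDigits]
  | cons d L ih => simp only [Nat.ofDigits]; positivity

lemma radInv_nonneg (b n : ℕ) : 0 ≤ radInv b n :=
  div_nonneg (ofDigits_nonneg (by positivity) _) b.cast_nonneg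

lemma radInv_zero (b : ℕ) : radInv b 0 = 0 := by
  simp [radInv, Nat.ofDigits]

lemma mul_radInv {b : ℕ} (hb : 1 < b) (n : ℕ) :
    b * radInv b n = (n % b : ℕ) + radInv b (n / b) := by
  have hb0 : (b : ℝ) ≠ 0 := by positivity
  rcases Nat.eq_zero_or_pos n with rfl | hn
  · simp [radInv_zero]
  · rw [radInv, Nat.digits_def' hb hn, radInv]
    simp only [Nat.ofDigits]
    field_simp

lemma radInv_lt_one {b : ℕ} (hb : 1 < b) (n : ℕ) : radInv b n < 1 := by
  induction n using Nat.strong_induction_on with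
  | _ n ih =>
    rcases Nat.eq_zero_or_pos n with rfl | hn
    · simp [radInv_zero]
    · have hstep := mul_radInv hb n
      have hlt := ih (n / b) (Nat.div_lt_self hn hb)
      have hdigit : ((n % b : ℕ) : ℝ) + 1 ≤ b := by exact_mod_cast Nat.mod_lt n (by omega)
      nlinarith

/-- For `d < b`, the number of `t` with `b * t + d < N`, i.e. `⌈(N - d) / b⌉`. -/
def countResidue (b d N : ℕ) : ℕ := (N + (b - 1 - d)) / b

lemma lt_countResidue_iff {b d : ℕ} (hd : d < b) (N t : ℕ) :
    t < countResidue b d N ↔ b * t + d < N := by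
  rw [countResidue, Nat.lt_iff_add_one_le, Nat.le_div_iff_mul_le (by omega), add_one_mul, mul_comm]
  omega

lemma abs_countResidue_sub_le {b d : ℕ} (hd : d < b) (N : ℕ) :
    |(countResidue b d N : ℝ) - N / b| ≤ 1 := by
  have hb : (0 : ℝ) < b := by exact_mod_cast (Nat.zero_le d).trans_lt hd
  have hle := Nat.div_mul_le_self (N + (b - 1 - d)) b
  have hlt := Nat.lt_div_mul_add (a := N + (b - 1 - d)) (b := b) (by omega)
  have hupper : (countResidue b d N * b : ℝ) ≤ N + b := by
    exact_mod_cast (show countResidue b d N * b ≤ N + b by unfold countResidue; omega)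
  have hlower : (N : ℝ) ≤ countResidue b d N * b + b := by
    exact_mod_cast (show N ≤ countResidue b d N * b + b by unfold countResidue; omega)
  rw [abs_le]
  constructor
  · have : (N : ℝ) / b ≤ countResidue b d N + 1 := by rw [div_le_iff₀ hb]; linarith
    linarith
  · have : (countResidue b d N : ℝ) - 1 ≤ N / b := by rw [le_div_iff₀ hb]; linarith
    linarith

lemma card_filter_mod_eq {b d : ℕ} (hd : d < b) (N : ℕ) (P : ℕ → Prop) [DecidablePred P] :
    #{n ∈ range N | n % b = d ∧ P (n / b)} = #{t ∈ range (countResidue b d N) | P t} := by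
  apply Finset.card_bij' (fun n _ => n / b) (fun t _ => b * t + d)
  · intro n hn
    simp only [mem_filter, mem_range, lt_countResidue_iff hd] at hn ⊢
    refine ⟨?_, hn.2.2⟩
    have := Nat.div_add_mod n b
    omega
  · intro t ht
    simp only [mem_filter, mem_range, lt_countResidue_iff hd] at ht ⊢
    refine ⟨ht.1, ?_, ?_⟩
    · rw [Nat.mul_add_mod, Nat.mod_eq_of_lt hd]
    · rw [Nat.mul_add_div (by omega), Nat.div_eq_of_lt hd, Nat.add_zero]
      exact ht.2
  · intro n hn
    simp only [mem_filter, mem_range] at hn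
    have := Nat.div_add_mod n b
    omega
  · intro t _
    rw [Nat.mul_add_div (by omega), Nat.div_eq_of_lt hd, Nat.add_zero]

lemma abs_card_filter_mod_lt_sub_le {b d : ℕ} (hd : d ≤ b) (N : ℕ) :
    |(#{n ∈ range N | n % b < d} : ℝ) - N * d / b| ≤ d := by
  have hfiber : #{n ∈ range N | n % b < d} = ∑ j ∈ range d, countResidue b j N := by
    rw [card_eq_sum_card_fiberwise (f := (· % b)) (t := range d)
      (fun n hn => by simpa using (mem_filter.mp hn).2)]
    refine sum_congr rfl fun j hj => ?_
    have hjd := mem_range.mp hj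
    have hfilter : ∀ n, (n % b < d ∧ n % b = j) ↔ (n % b = j ∧ True) :=
      fun n => ⟨fun h => ⟨h.2, trivial⟩, fun h => ⟨h.1 ▸ hjd, h.1⟩⟩
    rw [filter_filter, filter_congr fun n _ => hfilter n,
      card_filter_mod_eq (hjd.trans_le hd) N fun _ => True,
      filter_true_of_mem fun _ _ => trivial, card_range]
  have hsum : (N : ℝ) * d / b = ∑ _j ∈ range d, (N : ℝ) / b := by
    rw [sum_const, card_range, nsmul_eq_mul]; ring
  rw [hfiber, hsum, Nat.cast_sum, ← sum_sub_distrib]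
  calc |∑ j ∈ range d, ((countResidue b j N : ℝ) - N / b)|
      ≤ ∑ j ∈ range d, |(countResidue b j N : ℝ) - N / b| := abs_sum_le_sum_abs _ _
    _ ≤ ∑ _j ∈ range d, (1 : ℝ) :=
        sum_le_sum fun j hj => abs_countResidue_sub_le ((mem_range.mp hj).trans_le hd) N
    _ = d := by simp

lemma radInv_lt_digit_add_div_iff {b : ℕ} (hb : 1 < b) (d n : ℕ) {β : ℝ}
    (hβ : β ∈ Set.Icc (0 : ℝ) 1) :
    radInv b n < (d + β) / b ↔ n % b < d ∨ (n % b = d ∧ radInv b (n / b) < β) := by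
  have hb0 : (0 : ℝ) < b := by positivity
  have hy0 := radInv_nonneg b (n / b)
  have hy1 := radInv_lt_one hb (n / b)
  rw [lt_div_iff₀ hb0, mul_comm, mul_radInv hb]
  rcases Nat.lt_trichotomy (n % b) d with hlt | heq | hgt
  · have : ((n % b : ℕ) : ℝ) + 1 ≤ d := by exact_mod_cast hlt
    exact iff_of_true (by linarith [hβ.1]) (Or.inl hlt)
  · simp [heq]
  · have : (d : ℝ) + 1 ≤ (n % b : ℕ) := by exact_mod_cast hgt
    exact iff_of_false (by linarith [hβ.2]) (by omega)

lemma exists_eq_digit_add_div {b : ℕ} (hb : 0 < b) {β : ℝ} (hβ : β ∈ Set.Icc (0 : ℝ) 1) :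
    ∃ d < b, ∃ β' ∈ Set.Icc (0 : ℝ) 1, β = (d + β') / b := by
  have hb0 : (0 : ℝ) < b := by exact_mod_cast hb
  set d := min ⌊b * β⌋₊ (b - 1) with hd
  have hd_le : (d : ℝ) ≤ b * β :=
    (Nat.cast_le.mpr (min_le_left _ _)).trans (Nat.floor_le (by nlinarith [hβ.1]))
  have hd_ge : b * β ≤ d + 1 := by
    rcases min_cases ⌊b * β⌋₊ (b - 1) with ⟨h, -⟩ | ⟨h, -⟩ <;> rw [hd, h]
    · exact (Nat.lt_floor_add_one _).le
    · rw [Nat.cast_sub hb, Nat.cast_one]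
      nlinarith [hβ.2]
  refine ⟨d, by omega, b * β - d, ⟨by linarith, by linarith⟩, ?_⟩
  field_simp
  ring

noncomputable def vdcCount (b N : ℕ) (β : ℝ) : ℕ := #{n ∈ range N | radInv b n < β}

lemma vdcCount_digit_add_div {b d : ℕ} (hb : 1 < b) (hd : d < b) (N : ℕ) {β : ℝ}
    (hβ : β ∈ Set.Icc (0 : ℝ) 1) :
    vdcCount b N ((d + β) / b)
      = #{n ∈ range N | n % b < d} + vdcCount b (countResidue b d N) β := by
  rw [vdcCount, filter_congr fun n _ => radInv_lt_digit_add_div_iff hb d n hβ, filter_or,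
    card_union_of_disjoint, card_filter_mod_eq hd N fun t => radInv b t < β, vdcCount]
  exact disjoint_filter.mpr fun n _ hlt heq => by omega

theorem abs_vdcCount_sub_le {b : ℕ} (hb : 1 < b) (m : ℕ) :
    ∀ N : ℕ, ∀ β ∈ Set.Icc (0 : ℝ) 1,
      |(vdcCount b N β : ℝ) - N * β| ≤ (b + 2) * m + N / b ^ m := by
  induction m with
  | zero =>
    intro N β hβ
    have hcount : (vdcCount b N β : ℝ) ≤ N := by
      exact_mod_cast (card_filter_le _ _).trans (card_range N).le
    have hNβ : (N : ℝ) * β ≤ N := mul_le_of_le_one_right N.cast_nonneg hβ.2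
    have := mul_nonneg N.cast_nonneg hβ.1
    simp only [CharP.cast_eq_zero, mul_zero, zero_add, pow_zero, div_one, abs_le]
    constructor <;> linarith [(vdcCount b N β).cast_nonneg (α := ℝ)]
  | succ m ih =>
    intro N β hβ
    obtain ⟨d, hd, β', hβ', rfl⟩ := exists_eq_digit_add_div (zero_lt_one.trans hb) hβ
    have hdigits := abs_card_filter_mod_lt_sub_le hd.le N
    have hrest := ih (countResidue b d N) β' hβ'
    have hlength := abs_countResidue_sub_le hd N
    rw [vdcCount_digit_add_div hb hd N hβ', Nat.cast_add]
    set T : ℝ := (countResidue b d N : ℝ)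
    have hdecomp : (#{n ∈ range N | n % b < d} : ℝ) + vdcCount b (countResidue b d N) β'
        - N * ((d + β') / b) = ((#{n ∈ range N | n % b < d} : ℝ) - N * d / b)
          + ((vdcCount b (countResidue b d N) β' : ℝ) - T * β') + (T - N / b) * β' := by
      field_simp
      ring
    have hshift : |(T - N / b) * β'| ≤ 1 := by
      rw [abs_mul, abs_of_nonneg hβ'.1]
      exact mul_le_one₀ hlength hβ'.1 hβ'.2
    have hT : T / b ^ m ≤ N / b ^ (m + 1) + 1 := by
      have hpow : (1 : ℝ) ≤ b ^ m := one_le_pow₀ (by exact_mod_cast hb.le)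
      calc T / b ^ m ≤ (N / b + 1) / b ^ m := by
            gcongr; linarith [(abs_le.mp hlength).2]
        _ = N / b ^ (m + 1) + 1 / b ^ m := by rw [pow_succ]; field_simp
        _ ≤ N / b ^ (m + 1) + 1 := by gcongr; exact div_le_one_of_le₀ hpow (by positivity)
    have hdb : (d : ℝ) ≤ b := by exact_mod_cast hd.le
    rw [hdecomp]
    calc _ ≤ |(#{n ∈ range N | n % b < d} : ℝ) - N * d / b|
          + |(vdcCount b (countResidue b d N) β' : ℝ) - T * β'| + |(T - N / b) * β'| :=
          abs_add_three _ _ _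
      _ ≤ (b + 2) * (m + 1 : ℕ) + N / b ^ (m + 1) := by push_cast; linarith

lemma starDiscrepancy_le {N : ℕ} {x : ℕ → ℝ} {a : ℝ} (ha : 0 ≤ a)
    (h : ∀ β : ℝ, 0 < β → β ≤ 1 → |(#{n ∈ Icc 1 N | 0 ≤ x n ∧ x n < β} : ℝ) / N - β| ≤ a) :
    starDiscrepancy N x ≤ a :=
  Real.sSup_le (by rintro v ⟨β, hβ0, hβ1, rfl⟩; exact h β hβ0 hβ1) ha

lemma card_filter_Icc_radInv_add_one (b N : ℕ) {β : ℝ} (hβ : 0 < β) :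
    #{n ∈ Icc 1 N | 0 ≤ radInv b n ∧ radInv b n < β} + 1 = vdcCount b (N + 1) β := by
  have hrange : range (N + 1) = insert 0 (Icc 1 N) := by
    ext n
    simp only [mem_range, mem_insert, mem_Icc]
    omega
  rw [vdcCount, hrange, filter_insert, if_pos (by rwa [radInv_zero]),
    card_insert_of_notMem (by simp)]
  congr 2
  exact filter_congr fun n _ => and_iff_right (radInv_nonneg b n)

lemma abs_card_filter_Icc_radInv_sub_le {b m N : ℕ} (hb : 1 < b) (hm : N + 1 ≤ b ^ m) {β : ℝ}
    (hβ0 : 0 < β) (hβ1 : β ≤ 1) :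
    |(#{n ∈ Icc 1 N | 0 ≤ radInv b n ∧ radInv b n < β} : ℝ) - N * β| ≤ (b + 2) * m + 2 := by
  have hcount := abs_vdcCount_sub_le hb m (N + 1) β ⟨hβ0.le, hβ1⟩
  rw [← card_filter_Icc_radInv_add_one b N hβ0] at hcount
  have hfew : ((N + 1 : ℕ) : ℝ) / b ^ m ≤ 1 :=
    div_le_one_of_le₀ (by exact_mod_cast hm) (by positivity)
  push_cast at hcount hfew
  rw [abs_le] at hcount ⊢
  constructor <;> linarith [hcount.1, hcount.2]

lemma natLog_add_one_le {b N : ℕ} (hb : 2 ≤ b) (hN : 1 ≤ N) :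
    ((Nat.log b (N + 1) + 1 : ℕ) : ℝ) ≤ 2 * Real.log (N + 1) / Real.log 2 := by
  have hlog2 : 0 < Real.log 2 := Real.log_pos one_lt_two
  have htwo : (2 : ℝ) ≤ N + 1 := by norm_cast; omega
  have hone : Real.log 2 ≤ Real.log (N + 1) := Real.log_le_log two_pos htwo
  have hpow : ((b ^ Nat.log b (N + 1) : ℕ) : ℝ) ≤ N + 1 := by
    exact_mod_cast Nat.pow_log_le_self b (Nat.succ_ne_zero N)
  have hlog : Nat.log b (N + 1) * Real.log 2 ≤ Real.log (N + 1) := by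
    calc Nat.log b (N + 1) * Real.log 2 ≤ Nat.log b (N + 1) * Real.log b := by
          gcongr; exact_mod_cast hb
      _ = Real.log ((b ^ Nat.log b (N + 1) : ℕ) : ℝ) := by push_cast; rw [Real.log_pow]
      _ ≤ Real.log (N + 1) := Real.log_le_log (by positivity) hpow
  rw [le_div_iff₀ hlog2]
  push_cast
  linarith

theorem stmt12 (b : ℕ) (hb : 2 ≤ b) :
    ∃ C : ℝ, 0 < C ∧ ∀ N : ℕ, 1 ≤ N →
      starDiscrepancy N (fun n => radInv b n) ≤ C * Real.log (N + 1) / N := by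
  have hlog2 : 0 < Real.log 2 := Real.log_pos one_lt_two
  refine ⟨(2 * b + 8) / Real.log 2, by positivity, fun N hN => ?_⟩
  have hN0 : (0 : ℝ) < N := by exact_mod_cast hN
  have hL : 0 ≤ Real.log (N + 1) := Real.log_nonneg (by linarith)
  have hm := natLog_add_one_le hb hN
  set m := Nat.log b (N + 1) + 1
  have hbm : N + 1 ≤ b ^ m := (Nat.lt_pow_succ_log_self hb (N + 1)).le
  refine starDiscrepancy_le (by positivity) fun β hβ0 hβ1 => ?_
  rw [div_sub' hN0.ne', abs_div, abs_of_pos hN0]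
  gcongr
  have hm1 : (1 : ℝ) ≤ m := by exact_mod_cast Nat.le_add_left 1 _
  calc _ ≤ (b + 2) * (m : ℝ) + 2 := abs_card_filter_Icc_radInv_sub_le hb hbm hβ0 hβ1
    _ ≤ (b + 4) * (2 * Real.log (N + 1) / Real.log 2) := by nlinarith
    _ = (2 * b + 8) / Real.log 2 * Real.log (N + 1) := by ring
end
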